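/- Let A be a GFA over a set E of event signatures such that every constant mentioned in a guard of A belongs to the finite set C. Then a trace σ over E is accepted by A if and only if the abstract trace σ^{P_C}, obtained by replacing each attribute value by the unique region of P_C containing it, is accepted by A under region-level guard evaluation. In particular, acceptance of arbitrary (real-valued) traces by A is decided by a finite-state automaton over the finite alphabet of abstract events. -/

import Mathlib

/-- The region partition `P_C` induced by the sorted constants `c 0 < c 1 < ... < c (m-1)`. -/
def regionPartition {m : ℕ} (hm : 0 < m) (c : Fin m → ℝ) : Set (Set ℝ) :=
  {S | S = Set.Iio (c ⟨0, hm⟩) ∨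
       S = Set.Ioi (c ⟨m - 1, Nat.sub_lt hm Nat.one_pos⟩) ∨
       (∃ i : Fin m, S = Set.Icc (c i) (c i)) ∨
       (∃ i : Fin m, ∃ h : (i : ℕ) + 1 < m, S = Set.Ioo (c i) (c ⟨(i : ℕ) + 1, h⟩))}

/-- Conditions over event names `N` and attributes `A`. -/
inductive Cond (N A : Type) : Type where
  | name : N → Cond N A
  | lt : A → ℝ → Cond N A
  | eq : A → ℝ → Cond N A
  | gt : A → ℝ → Cond N A
  | neg : Cond N A → Cond N A
  | conj : Cond N A → Cond N A → Cond N A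

/-- Satisfaction of a condition by a (concrete) event `⟨n, ν⟩`. -/
def csat {N A : Type} (n : N) (ν : A → ℝ) : Cond N A → Prop
  | .name x => x = n
  | .lt a k => ν a < k
  | .eq a k => ν a = k
  | .gt a k => ν a > k
  | .neg φ => ¬ csat n ν φ
  | .conj φ ψ => csat n ν φ ∧ csat n ν ψ

/-- Region-level satisfaction of a condition by an abstract event `⟨n, ρ⟩` whose
attribute values are regions: atomic comparisons are evaluated region-wise. -/
def asat {N A : Type} (n : N) (ρ : A → Set ℝ) : Cond N A → Prop
  | .name x => x = n
  | .lt a k => ∀ x ∈ ρ a, x < k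
  | .eq a k => ∀ x ∈ ρ a, x = k
  | .gt a k => ∀ x ∈ ρ a, x > k
  | .neg φ => ¬ asat n ρ φ
  | .conj φ ψ => asat n ρ φ ∧ asat n ρ ψ

/-- The set of constants mentioned in a condition. -/
def Cond.consts {N A : Type} : Cond N A → Set ℝ
  | .name _ => ∅
  | .lt _ k => {k}
  | .eq _ k => {k}
  | .gt _ k => {k}
  | .neg φ => φ.consts
  | .conj φ ψ => φ.consts ∪ ψ.consts

/-- A guarded finite-state automaton over states `Q`, event names `N` and
attributes `A`: an initial state, a condition-labeled transition relation and a set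
of final states. -/
structure GFA (Q N A : Type) where
  init : Q
  trans : Q → Cond N A → Q → Prop
  final : Q → Prop

/-- Acceptance of a (concrete) trace from a state of the GFA. -/
inductive GAccepts {Q N A : Type} (G : GFA Q N A) : Q → List (N × (A → ℝ)) → Prop
  | nil {q} : G.final q → GAccepts G q []
  | cons {q φ q' n ν σ} : G.trans q φ q' → csat n ν φ →
      GAccepts G q' σ → GAccepts G q ((n, ν) :: σ)

/-- Acceptance of an abstract (region-valued) trace under region-level guard
evaluation. -/
inductive GAAccepts {Q N A : Type} (G : GFA Q N A) : Q → List (N × (A → Set ℝ)) → Prop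
  | nil {q} : G.final q → GAAccepts G q []
  | cons {q φ q' n ρ σ} : G.trans q φ q' → asat n ρ φ →
      GAAccepts G q' σ → GAAccepts G q ((n, ρ) :: σ)

/-- The set of constants mentioned in some guard of the GFA. -/
def GFA.consts {Q N A : Type} (G : GFA Q N A) : Set ℝ :=
  {k | ∃ q φ q', G.trans q φ q' ∧ k ∈ Cond.consts φ}

/-- `σa` is the abstract trace `σ^{P_C}` of `σ`: same names, and every attribute value
is replaced by the (unique) region of `P_C` containing it. -/
def AbstractsTrace {N A : Type} {m : ℕ} (hm : 0 < m) (c : Fin m → ℝ)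
    (σ : List (N × (A → ℝ))) (σa : List (N × (A → Set ℝ))) : Prop :=
  List.Forall₂
    (fun e ea => e.1 = ea.1 ∧
      ∀ a : A, ea.2 a ∈ regionPartition hm c ∧ e.2 a ∈ ea.2 a) σ σa

/-!
Every region of `P_C` lies entirely below, at, or entirely above each constant of `C`, so every
atomic guard with a constant from `C` has the same truth value at all points of a region. By
induction on conditions, concrete and region-level satisfaction of the guards of the automaton
therefore agree event by event, and runs on `σ` and on `σ^{P_C}` correspond step by step.
Finiteness of the abstract alphabet holds because `P_C` has at most `2m + 1` regions.
-/

open Set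

def IsHomogeneousAt (R : Set ℝ) (k : ℝ) : Prop :=
  R ⊆ Iio k ∨ R ⊆ {k} ∨ R ⊆ Ioi k

namespace IsHomogeneousAt

variable {R : Set ℝ} {k x : ℝ}

lemma forall_lt_iff (h : IsHomogeneousAt R k) (hx : x ∈ R) : (∀ y ∈ R, y < k) ↔ x < k := by
  refine ⟨fun hR => hR x hx, fun hxk => ?_⟩
  rcases h with h | h | h
  · exact h
  · exact absurd (h hx) hxk.ne
  · exact absurd (h hx) hxk.not_gt

lemma forall_eq_iff (h : IsHomogeneousAt R k) (hx : x ∈ R) : (∀ y ∈ R, y = k) ↔ x = k := by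
  refine ⟨fun hR => hR x hx, fun hxk => ?_⟩
  rcases h with h | h | h
  · exact absurd (h hx) hxk.not_lt
  · exact h
  · exact absurd (h hx) (hxk ▸ lt_irrefl k)

lemma forall_gt_iff (h : IsHomogeneousAt R k) (hx : x ∈ R) : (∀ y ∈ R, y > k) ↔ x > k := by
  refine ⟨fun hR => hR x hx, fun hxk => ?_⟩
  rcases h with h | h | h
  · exact absurd (h hx) hxk.not_gt
  · exact absurd (h hx) hxk.ne'
  · exact h

end IsHomogeneousAt

lemma csat_iff_asat {N A : Type} {n : N} {ν : A → ℝ} {ρ : A → Set ℝ}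
    (hν : ∀ a, ν a ∈ ρ a) :
    ∀ φ : Cond N A, (∀ a, ∀ k ∈ φ.consts, IsHomogeneousAt (ρ a) k) →
      (csat n ν φ ↔ asat n ρ φ)
  | .name _, _ => Iff.rfl
  | .lt a k, h => ((h a k rfl).forall_lt_iff (hν a)).symm
  | .eq a k, h => ((h a k rfl).forall_eq_iff (hν a)).symm
  | .gt a k, h => ((h a k rfl).forall_gt_iff (hν a)).symm
  | .neg φ, h => not_congr (csat_iff_asat hν φ h)
  | .conj φ ψ, h =>
    and_congr (csat_iff_asat hν φ fun a k hk => h a k (Or.inl hk))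
      (csat_iff_asat hν ψ fun a k hk => h a k (Or.inr hk))

lemma isHomogeneousAt_of_mem_regionPartition {m : ℕ} {hm : 0 < m} {c : Fin m → ℝ}
    (hc : StrictMono c) {R : Set ℝ}
    (hR : R ∈ regionPartition hm c) (j : Fin m) : IsHomogeneousAt R (c j) := by
  rcases hR with rfl | rfl | ⟨i, rfl⟩ | ⟨i, hi, rfl⟩
  · exact Or.inl (Iio_subset_Iio (hc.monotone (Fin.le_def.2 (Nat.zero_le _))))
  · exact Or.inr (Or.inr
      (Ioi_subset_Ioi (hc.monotone (Fin.le_def.2 (Nat.le_pred_of_lt j.isLt)))))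
  · rcases lt_trichotomy i j with hij | rfl | hji
    · exact Or.inl fun x hx => hx.2.trans_lt (hc hij)
    · exact Or.inr (Or.inl (Icc_self _).subset)
    · exact Or.inr (Or.inr fun x hx => (hc hji).trans_le hx.1)
  · rcases le_or_gt j i with hji | hij
    · exact Or.inr (Or.inr fun x hx => (hc.monotone hji).trans_lt hx.1)
    · exact Or.inl fun x hx => hx.2.trans_le (hc.monotone (Fin.le_def.2 hij))

lemma regionPartition_finite {m : ℕ} (hm : 0 < m) (c : Fin m → ℝ) :
    (regionPartition hm c).Finite := by
  refine (((finite_singleton (Ioi (c ⟨m - 1, Nat.sub_lt hm Nat.one_pos⟩))).insert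
    (Iio (c ⟨0, hm⟩))).union ((finite_range fun i => Icc (c i) (c i)).union
    (finite_range fun p : Fin m × Fin m => Ioo (c p.1) (c p.2)))).subset ?_
  rintro S (rfl | rfl | ⟨i, rfl⟩ | ⟨i, hi, rfl⟩)
  · simp
  · simp
  · exact Or.inr (Or.inl ⟨i, rfl⟩)
  · exact Or.inr (Or.inr ⟨(i, ⟨i + 1, hi⟩), rfl⟩)

section Acceptance

variable {Q N A : Type} {G : GFA Q N A} {q : Q}

lemma GAccepts.nil_iff : GAccepts G q [] ↔ G.final q :=
  ⟨fun | .nil h => h, .nil⟩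

lemma GAAccepts.nil_iff : GAAccepts G q [] ↔ G.final q :=
  ⟨fun | .nil h => h, .nil⟩

lemma GAccepts.cons_iff {n : N} {ν : A → ℝ} {σ : List (N × (A → ℝ))} :
    GAccepts G q ((n, ν) :: σ) ↔
      ∃ φ q', G.trans q φ q' ∧ csat n ν φ ∧ GAccepts G q' σ :=
  ⟨fun | .cons ht hs hσ => ⟨_, _, ht, hs, hσ⟩,
    fun ⟨_, _, ht, hs, hσ⟩ => .cons ht hs hσ⟩

lemma GAAccepts.cons_iff {n : N} {ρ : A → Set ℝ} {σ : List (N × (A → Set ℝ))} :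
    GAAccepts G q ((n, ρ) :: σ) ↔
      ∃ φ q', G.trans q φ q' ∧ asat n ρ φ ∧ GAAccepts G q' σ :=
  ⟨fun | .cons ht hs hσ => ⟨_, _, ht, hs, hσ⟩,
    fun ⟨_, _, ht, hs, hσ⟩ => .cons ht hs hσ⟩

lemma gAccepts_iff_gAAccepts_of_forall₂ {P : N × (A → ℝ) → N × (A → Set ℝ) → Prop}
    (hP : ∀ q φ q' e ea, G.trans q φ q' → P e ea → (csat e.1 e.2 φ ↔ asat ea.1 ea.2 φ))
    {σ : List (N × (A → ℝ))} {σa : List (N × (A → Set ℝ))}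
    (hσ : List.Forall₂ P σ σa) :
    GAccepts G q σ ↔ GAAccepts G q σa := by
  induction hσ generalizing q with
  | nil => rw [GAccepts.nil_iff, GAAccepts.nil_iff]
  | @cons e ea σ σa he _ ih =>
    rw [← Prod.mk.eta (p := e), ← Prod.mk.eta (p := ea),
      GAccepts.cons_iff, GAAccepts.cons_iff]
    exact exists_congr fun φ => exists_congr fun q' =>
      and_congr_right fun ht => and_congr (hP q φ q' e ea ht he) ih

end Acceptance

/-- if every constant mentioned in a guard of the GFA `A` belongs to the
finite set `C`, then a trace `σ` is accepted by `A` iff its abstract trace `σ^{P_C}`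
is accepted by `A` under region-level guard evaluation.  In particular (the abstract
alphabet being finite for finite `N` and `A`), acceptance of arbitrary real-valued
traces is decided by a finite-state automaton over the finite alphabet of abstract
events. -/
theorem acceptance_iff_abstract_acceptance {m : ℕ} (hm : 0 < m) (c : Fin m → ℝ)
    (hc : StrictMono c) {Q N A : Type} [Finite N] [Finite A]
    (G : GFA Q N A) (hconsts : G.consts ⊆ Set.range c) :
    (∀ (σ : List (N × (A → ℝ))) (σa : List (N × (A → Set ℝ))),
      AbstractsTrace hm c σ σa →
      (GAccepts G G.init σ ↔ GAAccepts G G.init σa)) ∧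
    Finite (N × (A → {R : Set ℝ // R ∈ regionPartition hm c})) := by
  refine ⟨fun σ σa hσ => gAccepts_iff_gAAccepts_of_forall₂ ?_ hσ, ?_⟩
  · rintro q φ q' ⟨n, ν⟩ ⟨n', ρ⟩ ht ⟨rfl, hρ⟩
    refine csat_iff_asat (fun a => (hρ a).2) φ fun a k hk => ?_
    obtain ⟨j, rfl⟩ := hconsts ⟨q, φ, q', ht, hk⟩
    exact isHomogeneousAt_of_mem_regionPartition hc (hρ a).1 j
  · have := (regionPartition_finite hm c).to_subtype
    infer_instance
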